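/- arXiv:2103.00924 — 2 statements merged into one kernel-verified Lean document; each statement's English description precedes it below -/
import Mathlib

section
/- For any tripartite state ρ on H_A ⊗ H_B ⊗ H_C, the tripartite multipartite quantum discord dominates the sum D_{A;B;C}(ρ) ≥ D_{A;B}(ρ^{AB}) + D_{AB;C}(ρ), where ρ^{AB} = Tr_C ρ and D_{AB;C} treats AB as a single subsystem. -/
open Matrix Kronecker BigOperators
open scoped ComplexOrder

noncomputable section

def IsState {n : Type*} [Fintype n] [DecidableEq n] (ρ : Matrix n n ℂ) : Prop :=
  ρ.PosSemidef ∧ ρ.trace = 1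

/-- Von Neumann entropy via the eigenvalues of a Hermitian matrix. -/
noncomputable def vnEntropy {n : Type*} [Fintype n] [DecidableEq n] (ρ : Matrix n n ℂ) : ℝ :=
  if h : ρ.IsHermitian then ∑ i, Real.negMulLog (h.eigenvalues i) else 0

/-- A rank-one von Neumann measurement: a family of rank-one orthogonal
projections summing to the identity. -/
structure VNMeas (n : Type*) [Fintype n] [DecidableEq n] where
  P : n → Matrix n n ℂ
  herm : ∀ j, (P j).IsHermitian
  idem : ∀ j, P j * P j = P j
  rankOne : ∀ j, (P j).trace = 1
  orth : ∀ j k, j ≠ k → P j * P k = 0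
  sum_eq : ∑ j, P j = 1

variable {A B : Type*} [Fintype A] [DecidableEq A] [Fintype B] [DecidableEq B]

/-- reduced state on the first factor -/
noncomputable def margFst (ρ : Matrix (A × B) (A × B) ℂ) : Matrix A A ℂ :=
  fun a a' => ∑ b, ρ (a, b) (a', b)

/-- reduced state on the second factor -/
noncomputable def margSnd (ρ : Matrix (A × B) (A × B) ℂ) : Matrix B B ℂ :=
  fun b b' => ∑ a, ρ (a, b) (a, b')

/-- the post-measurement state `Σ_j (Π_j ⊗ 1) ρ (Π_j ⊗ 1)` -/
noncomputable def measFst (M : VNMeas A) (ρ : Matrix (A × B) (A × B) ℂ) :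
    Matrix (A × B) (A × B) ℂ :=
  ∑ j, (M.P j ⊗ₖ (1 : Matrix B B ℂ)) * ρ * (M.P j ⊗ₖ (1 : Matrix B B ℂ))

/-- quantum mutual information -/
noncomputable def mutualInfo (ρ : Matrix (A × B) (A × B) ℂ) : ℝ :=
  vnEntropy (margFst ρ) + vnEntropy (margSnd ρ) - vnEntropy ρ

/-- bipartite quantum discord with measurement on the first party -/
noncomputable def discord (ρ : Matrix (A × B) (A × B) ℂ) : ℝ :=
  ⨅ M : VNMeas A,
    ((vnEntropy (measFst M ρ) - vnEntropy (margFst (measFst M ρ))) -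
      (vnEntropy ρ - vnEntropy (margFst ρ)))


variable {C : Type*} [Fintype C] [DecidableEq C]

/-- threefold Kronecker product on `A × B × C` -/
noncomputable def kron3 (M : Matrix A A ℂ) (N : Matrix B B ℂ) (K : Matrix C C ℂ) :
    Matrix (A × B × C) (A × B × C) ℂ :=
  fun p q => M p.1 q.1 * N p.2.1 q.2.1 * K p.2.2 q.2.2

/-- trace out `C`: the reduced state `ρ^{AB}` -/
noncomputable def ptrC3 (ρ : Matrix (A × B × C) (A × B × C) ℂ) : Matrix (A × B) (A × B) ℂ :=
  fun x y => ∑ c, ρ (x.1, x.2, c) (y.1, y.2, c)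

/-- trace out `B`: the reduced state `ρ^{AC}` -/
noncomputable def ptrB3 (ρ : Matrix (A × B × C) (A × B × C) ℂ) : Matrix (A × C) (A × C) ℂ :=
  fun x y => ∑ b, ρ (x.1, b, x.2) (y.1, b, y.2)

/-- trace out `A`: the reduced state `ρ^{BC}` -/
noncomputable def ptrA3 (ρ : Matrix (A × B × C) (A × B × C) ℂ) : Matrix (B × C) (B × C) ℂ :=
  fun x y => ∑ a, ρ (a, x) (a, y)

/-- the reduced state `ρ^{A}` of a tripartite state -/
noncomputable def ptrBC3 (ρ : Matrix (A × B × C) (A × B × C) ℂ) : Matrix A A ℂ :=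
  fun a a' => ∑ z : B × C, ρ (a, z) (a', z)

/-- A sequential conditional measurement: a rank-one von Neumann measurement on `A`
followed by a conditional rank-one von Neumann measurement on `B`. -/
structure SeqMeas3 (A B : Type*) [Fintype A] [DecidableEq A] [Fintype B] [DecidableEq B] where
  fst : VNMeas A
  snd : A → VNMeas B

/-- state after the measurement on `A` only -/
noncomputable def meas1 (m : SeqMeas3 A B) (ρ : Matrix (A × B × C) (A × B × C) ℂ) :
    Matrix (A × B × C) (A × B × C) ℂ :=
  ∑ j, kron3 (m.fst.P j) (1 : Matrix B B ℂ) (1 : Matrix C C ℂ) * ρ *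
    kron3 (m.fst.P j) (1 : Matrix B B ℂ) (1 : Matrix C C ℂ)

/-- state after the full sequential measurement `Π^{AB}` -/
noncomputable def meas2 (m : SeqMeas3 A B) (ρ : Matrix (A × B × C) (A × B × C) ℂ) :
    Matrix (A × B × C) (A × B × C) ℂ :=
  ∑ j, ∑ k, kron3 (m.fst.P j) ((m.snd j).P k) (1 : Matrix C C ℂ) * ρ *
    kron3 (m.fst.P j) ((m.snd j).P k) (1 : Matrix C C ℂ)

/-- the quantity optimized in the tripartite multipartite quantum discord,
`−S_{BC|A}(ρ) + S_{B|Π^A}(ρ) + S_{C|Π^{AB}}(ρ)`. -/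
noncomputable def mqd3Val (m : SeqMeas3 A B) (ρ : Matrix (A × B × C) (A × B × C) ℂ) : ℝ :=
  (vnEntropy (ptrC3 (meas1 m ρ)) - vnEntropy (ptrBC3 (meas1 m ρ)))
    + (vnEntropy (meas2 m ρ) - vnEntropy (ptrC3 (meas2 m ρ)))
    - (vnEntropy ρ - vnEntropy (ptrBC3 ρ))

/-- the tripartite multipartite quantum discord `D_{A;B;C}` with ordering `A → B` -/
noncomputable def mqd3 (ρ : Matrix (A × B × C) (A × B × C) ℂ) : ℝ :=
  ⨅ m : SeqMeas3 A B, mqd3Val m ρ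

/-- lift a matrix on `A × B` to `A × B × C` by tensoring with the identity on `C` -/
noncomputable def liftAB (N : Matrix (A × B) (A × B) ℂ) :
    Matrix (A × B × C) (A × B × C) ℂ :=
  fun p q => N (p.1, p.2.1) (q.1, q.2.1) * (if p.2.2 = q.2.2 then 1 else 0)

/-- state after a von Neumann measurement on the composite party `AB` -/
noncomputable def measAB (M : VNMeas (A × B)) (ρ : Matrix (A × B × C) (A × B × C) ℂ) :
    Matrix (A × B × C) (A × B × C) ℂ :=
  ∑ j, liftAB (M.P j) * ρ * liftAB (M.P j)

/-- bipartite quantum discord `D_{AB;C}` with `AB` regarded as a single measured party -/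
noncomputable def discordAB_C (ρ : Matrix (A × B × C) (A × B × C) ℂ) : ℝ :=
  ⨅ M : VNMeas (A × B),
    ((vnEntropy (measAB M ρ) - vnEntropy (ptrC3 (measAB M ρ))) -
      (vnEntropy ρ - vnEntropy (ptrC3 ρ)))

/-!
For a sequential measurement `m = (Π^A, Π^{B|A})`, the quantity minimised in `D_{A;B;C}` splits
exactly into the discord objective of `ρ^{AB}` under `Π^A` plus the `D_{AB;C}` objective of `ρ`
under the product measurement `Π^A_j ⊗ Π^{B|j}_k` on `AB`: tracing out `C` commutes with the
measurement on `A`, and `S(ρ^A) = S((ρ^{AB})^A)`. Bounding each summand below by its infimum gives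
the inequality; the infima are finite because the entropy of a state lies in `[0, dim]`.
-/

namespace Matrix

variable {l m n p α ι : Type*} [NonUnitalNonAssocSemiring α]

lemma sum_kronecker (s : Finset ι) (f : ι → Matrix l m α) (B : Matrix n p α) :
    (∑ j ∈ s, f j) ⊗ₖ B = ∑ j ∈ s, f j ⊗ₖ B := by
  ext
  simp [sum_apply, Finset.sum_mul]

lemma kronecker_sum (s : Finset ι) (A : Matrix l m α) (f : ι → Matrix n p α) :
    A ⊗ₖ (∑ j ∈ s, f j) = ∑ j ∈ s, A ⊗ₖ f j := by
  ext
  simp [sum_apply, Finset.mul_sum]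

end Matrix

section States

variable {n m : Type*} [Fintype n] [DecidableEq n] [Fintype m] [DecidableEq m]

lemma Matrix.IsHermitian.sum_eigenvalues_eq_one {ρ : Matrix n n ℂ} (hρ : ρ.IsHermitian)
    (htr : ρ.trace = 1) : ∑ i, hρ.eigenvalues i = 1 := by
  apply Complex.ofReal_injective
  rw [Complex.ofReal_sum, Complex.ofReal_one, ← htr, hρ.trace_eq_sum_eigenvalues]
  rfl

lemma vnEntropy_nonneg {ρ : Matrix n n ℂ} (h : IsState ρ) : 0 ≤ vnEntropy ρ := by
  obtain ⟨hpsd, htr⟩ := h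
  rw [vnEntropy, dif_pos hpsd.1]
  have hnn := hpsd.eigenvalues_nonneg
  refine Finset.sum_nonneg fun i _ => Real.negMulLog_nonneg (hnn i) ?_
  rw [← hpsd.1.sum_eigenvalues_eq_one htr]
  exact Finset.single_le_sum (fun j _ => hnn j) (Finset.mem_univ i)

lemma Matrix.PosSemidef.vnEntropy_le_card {ρ : Matrix n n ℂ} (h : ρ.PosSemidef) :
    vnEntropy ρ ≤ Fintype.card n := by
  rw [vnEntropy, dif_pos h.1]
  calc ∑ i, Real.negMulLog (h.1.eigenvalues i) ≤ ∑ _i : n, (1 : ℝ) :=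
        Finset.sum_le_sum fun i _ => (Real.negMulLog_le_one_sub_self
          (h.eigenvalues_nonneg i)).trans (by linarith [h.eigenvalues_nonneg i])
    _ = Fintype.card n := by simp

lemma bddBelow_range_vnEntropy_sub {ι : Type*} {X : ι → Matrix n n ℂ} {Y : ι → Matrix m m ℂ}
    (hX : ∀ i, IsState (X i)) (hY : ∀ i, (Y i).PosSemidef) (c : ℝ) :
    BddBelow (Set.range fun i => vnEntropy (X i) - vnEntropy (Y i) - c) := by
  refine ⟨-Fintype.card m - c, ?_⟩
  rintro _ ⟨i, rfl⟩
  linarith [vnEntropy_nonneg (hX i), (hY i).vnEntropy_le_card]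

lemma IsState.submatrix_equiv {ρ : Matrix n n ℂ} (h : IsState ρ) (e : m ≃ n) :
    IsState (ρ.submatrix e e) := by
  refine ⟨h.1.submatrix e, ?_⟩
  simp only [Matrix.trace, Matrix.diag, Matrix.submatrix_apply]
  rw [Equiv.sum_comp e (fun i => ρ i i)]
  exact h.2

lemma IsState.sum_mul_mul_of_projections {ι : Type*} [Fintype ι] {ρ : Matrix n n ℂ}
    (h : IsState ρ) {Q : ι → Matrix n n ℂ} (hherm : ∀ j, (Q j).IsHermitian)
    (hidem : ∀ j, Q j * Q j = Q j) (hsum : ∑ j, Q j = 1) :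
    IsState (∑ j, Q j * ρ * Q j) := by
  refine ⟨posSemidef_sum _ fun j _ => ?_, ?_⟩
  · simpa only [(hherm j).eq] using h.1.mul_mul_conjTranspose_same (Q j)
  · have htr : ∀ j, (Q j * ρ * Q j).trace = (Q j * ρ).trace := fun j => by
      rw [trace_mul_cycle, hidem]
    simp_rw [trace_sum, htr, ← trace_sum, ← Finset.sum_mul, hsum, one_mul, h.2]

end States

namespace VNMeas

variable {n : Type*} [Fintype n] [DecidableEq n]

def standardBasis : VNMeas n where
  P j := single j j 1
  herm j := by simp [IsHermitian, conjTranspose_single]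
  idem j := by rw [single_mul_single_same, one_mul]
  rankOne j := trace_single_eq_same _ _
  orth j k h := by simp [h]
  sum_eq := sum_single_one

instance : Nonempty (VNMeas n) := ⟨standardBasis⟩

variable {A B : Type*} [Fintype A] [DecidableEq A] [Fintype B] [DecidableEq B]

def condProd (M : VNMeas A) (N : A → VNMeas B) : VNMeas (A × B) where
  P jk := M.P jk.1 ⊗ₖ (N jk.1).P jk.2
  herm jk := by rw [IsHermitian, conjTranspose_kronecker, (M.herm _).eq, ((N _).herm _).eq]
  idem jk := by rw [← mul_kronecker_mul, M.idem, (N _).idem]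
  rankOne jk := by rw [trace_kronecker, M.rankOne, (N _).rankOne, one_mul]
  orth jk jk' h := by
    rw [← mul_kronecker_mul]
    by_cases h1 : jk.1 = jk'.1
    · rw [← h1, (N jk.1).orth _ _ fun h2 => h (Prod.ext h1 h2), kronecker_zero]
    · rw [M.orth _ _ h1, zero_kronecker]
  sum_eq := by
    simp only [Fintype.sum_prod_type, ← kronecker_sum, (N _).sum_eq, ← sum_kronecker, M.sum_eq,
      one_kronecker_one]

end VNMeas

section Bipartite

variable {A B : Type*}

lemma margFst_eq_sum_submatrix [Fintype B] (ρ : Matrix (A × B) (A × B) ℂ) :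
    margFst ρ = ∑ b, ρ.submatrix (fun a => (a, b)) (fun a => (a, b)) := by
  ext a a'
  simp [margFst, Matrix.sum_apply]

lemma trace_margFst [Fintype A] [Fintype B] (ρ : Matrix (A × B) (A × B) ℂ) :
    (margFst ρ).trace = ρ.trace := by
  simp only [Matrix.trace, Matrix.diag, margFst, Fintype.sum_prod_type]

lemma isState_margFst [Fintype A] [DecidableEq A] [Fintype B] [DecidableEq B]
    {ρ : Matrix (A × B) (A × B) ℂ} (h : IsState ρ) : IsState (margFst ρ) := by
  refine ⟨?_, by rw [trace_margFst, h.2]⟩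
  rw [margFst_eq_sum_submatrix]
  exact posSemidef_sum _ fun b _ => h.1.submatrix _

lemma margFst_sum [Fintype B] {ι : Type*} (s : Finset ι) (f : ι → Matrix (A × B) (A × B) ℂ) :
    margFst (∑ j ∈ s, f j) = ∑ j ∈ s, margFst (f j) := by
  ext a a'
  simp only [margFst, Matrix.sum_apply]
  exact Finset.sum_comm

lemma margFst_kronecker_one_mul_mul [Fintype A] [Fintype B] [DecidableEq B] (X Y : Matrix A A ℂ)
    (ρ : Matrix (A × B) (A × B) ℂ) :
    margFst ((X ⊗ₖ (1 : Matrix B B ℂ)) * ρ * (Y ⊗ₖ (1 : Matrix B B ℂ))) = X * margFst ρ * Y := by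
  ext a a'
  simp only [margFst, Matrix.mul_apply, kroneckerMap_apply, Matrix.one_apply,
    Fintype.sum_prod_type, mul_ite, ite_mul, mul_one, mul_zero, zero_mul,
    Finset.sum_ite_eq, Finset.sum_ite_eq', Finset.mem_univ, if_true, Finset.sum_mul,
    Finset.mul_sum]
  rw [Finset.sum_comm]
  exact Finset.sum_congr rfl fun _ _ => Finset.sum_comm

lemma isState_measFst [Fintype A] [DecidableEq A] [Fintype B] [DecidableEq B] (M : VNMeas A)
    {ρ : Matrix (A × B) (A × B) ℂ} (h : IsState ρ) : IsState (measFst M ρ) := by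
  refine h.sum_mul_mul_of_projections (fun j => ?_) (fun j => ?_) ?_
  · rw [IsHermitian, conjTranspose_kronecker, (M.herm j).eq, conjTranspose_one]
  · rw [← mul_kronecker_mul, M.idem, one_mul]
  · rw [← Matrix.sum_kronecker, M.sum_eq, one_kronecker_one]

def discordVal [Fintype A] [DecidableEq A] [Fintype B] [DecidableEq B] (M : VNMeas A)
    (σ : Matrix (A × B) (A × B) ℂ) : ℝ :=
  (vnEntropy (measFst M σ) - vnEntropy (margFst (measFst M σ))) -
    (vnEntropy σ - vnEntropy (margFst σ))

lemma discord_le_discordVal [Fintype A] [DecidableEq A] [Fintype B] [DecidableEq B]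
    {σ : Matrix (A × B) (A × B) ℂ} (hσ : IsState σ) (M : VNMeas A) :
    discord σ ≤ discordVal M σ :=
  ciInf_le (bddBelow_range_vnEntropy_sub (fun M => isState_measFst M hσ)
    (fun M => (isState_margFst (isState_measFst M hσ)).1) _) M

end Bipartite

section Tripartite

variable {A B C : Type*}

lemma ptrBC3_eq_margFst_ptrC3 [Fintype B] [Fintype C] (ρ : Matrix (A × B × C) (A × B × C) ℂ) :
    ptrBC3 ρ = margFst (ptrC3 ρ) := by
  ext a a'
  exact Fintype.sum_prod_type _

lemma kron3_one_eq_liftAB [DecidableEq C] (M : Matrix A A ℂ) (N : Matrix B B ℂ) :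
    kron3 M N (1 : Matrix C C ℂ) = liftAB (M ⊗ₖ N) := by
  ext p q
  simp [kron3, liftAB, Matrix.one_apply]

variable [Fintype A] [DecidableEq A] [Fintype B] [DecidableEq B] [Fintype C] [DecidableEq C]

def regroup : Matrix (A × B × C) (A × B × C) ℂ ≃ₐ[ℂ] Matrix ((A × B) × C) ((A × B) × C) ℂ :=
  reindexAlgEquiv ℂ ℂ (Equiv.prodAssoc A B C).symm

lemma ptrC3_eq_margFst_regroup (ρ : Matrix (A × B × C) (A × B × C) ℂ) :
    ptrC3 ρ = margFst (regroup ρ) :=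
  rfl

lemma isState_ptrC3 {ρ : Matrix (A × B × C) (A × B × C) ℂ} (h : IsState ρ) :
    IsState (ptrC3 ρ) :=
  isState_margFst (h.submatrix_equiv (Equiv.prodAssoc A B C))

lemma regroup_liftAB (N : Matrix (A × B) (A × B) ℂ) :
    regroup (liftAB N : Matrix (A × B × C) _ ℂ) = N ⊗ₖ (1 : Matrix C C ℂ) := by
  ext x y
  simp [regroup, liftAB, Matrix.one_apply]

lemma regroup_measAB (M : VNMeas (A × B)) (ρ : Matrix (A × B × C) (A × B × C) ℂ) :
    regroup (measAB M ρ) = measFst M (regroup ρ) := by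
  simp only [measAB, measFst, map_sum, map_mul, regroup_liftAB]

lemma isState_measAB (M : VNMeas (A × B)) {ρ : Matrix (A × B × C) (A × B × C) ℂ}
    (h : IsState ρ) : IsState (measAB M ρ) := by
  rw [← regroup.symm_apply_apply (measAB M ρ), regroup_measAB]
  exact (isState_measFst M (h.submatrix_equiv _)).submatrix_equiv _

lemma ptrC3_liftAB_mul_mul (X Y : Matrix (A × B) (A × B) ℂ)
    (ρ : Matrix (A × B × C) (A × B × C) ℂ) :
    ptrC3 (liftAB X * ρ * liftAB Y) = X * ptrC3 ρ * Y := by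
  rw [ptrC3_eq_margFst_regroup, ptrC3_eq_margFst_regroup, map_mul, map_mul, regroup_liftAB,
    regroup_liftAB, margFst_kronecker_one_mul_mul]

lemma ptrC3_meas1 (m : SeqMeas3 A B) (ρ : Matrix (A × B × C) (A × B × C) ℂ) :
    ptrC3 (meas1 m ρ) = measFst m.fst (ptrC3 ρ) := by
  simp only [meas1, measFst, kron3_one_eq_liftAB, ptrC3_eq_margFst_regroup, map_sum,
    margFst_sum]
  simp only [← ptrC3_eq_margFst_regroup, ptrC3_liftAB_mul_mul]

lemma measAB_condProd (m : SeqMeas3 A B) (ρ : Matrix (A × B × C) (A × B × C) ℂ) :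
    measAB (m.fst.condProd m.snd) ρ = meas2 m ρ := by
  simp only [measAB, meas2, Fintype.sum_prod_type, kron3_one_eq_liftAB]
  rfl

instance : Nonempty (SeqMeas3 A B) :=
  ⟨⟨Classical.arbitrary _, fun _ => Classical.arbitrary _⟩⟩

def discordAB_CVal (M : VNMeas (A × B)) (ρ : Matrix (A × B × C) (A × B × C) ℂ) : ℝ :=
  (vnEntropy (measAB M ρ) - vnEntropy (ptrC3 (measAB M ρ))) -
    (vnEntropy ρ - vnEntropy (ptrC3 ρ))

lemma discordAB_C_le_discordAB_CVal {ρ : Matrix (A × B × C) (A × B × C) ℂ} (hρ : IsState ρ)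
    (M : VNMeas (A × B)) : discordAB_C ρ ≤ discordAB_CVal M ρ :=
  ciInf_le (bddBelow_range_vnEntropy_sub (fun M => isState_measAB M hρ)
    (fun M => (isState_ptrC3 (isState_measAB M hρ)).1) _) M

lemma mqd3Val_eq_discordVal_add_discordAB_CVal (m : SeqMeas3 A B)
    (ρ : Matrix (A × B × C) (A × B × C) ℂ) :
    mqd3Val m ρ = discordVal m.fst (ptrC3 ρ) + discordAB_CVal (m.fst.condProd m.snd) ρ := by
  rw [mqd3Val, discordVal, discordAB_CVal, ptrBC3_eq_margFst_ptrC3, ptrBC3_eq_margFst_ptrC3,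
    ptrC3_meas1, measAB_condProd]
  ring

end Tripartite

/-- `D_{A;B;C}(ρ) ≥ D_{A;B}(ρ^{AB}) + D_{AB;C}(ρ)`. -/
theorem mqd3_ge_discordAB_add_discordABC
    (ρ : Matrix (A × B × C) (A × B × C) ℂ) (hρ : IsState ρ) :
    mqd3 ρ ≥ discord (ptrC3 ρ) + discordAB_C ρ :=
  le_ciInf fun m => by
    rw [mqd3Val_eq_discordVal_add_discordAB_CVal]
    exact add_le_add (discord_le_discordVal (isState_ptrC3 hρ) m.fst)
      (discordAB_C_le_discordAB_CVal hρ (m.fst.condProd m.snd))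

end
end

section
/- The global quantum discord of a product state factors out the uncorrelated subsystem: for ρ = ρ^{AB} ⊗ ρ^C, D_{A:B:C}(ρ^{AB} ⊗ ρ^C) = D_{A:B}(ρ^{AB}). -/
/-!
A fully local measurement of `ρ^{AB} ⊗ ρ^C` produces the product state
`Φ_{AB}(ρ^{AB}) ⊗ Φ_C(ρ^C)`. For a product of unit-trace states the one-party marginals are those
of the factors and the von Neumann entropy is additive (the spectrum of `σ ⊗ τ` consists of the
products of eigenvalues), so `I(σ ⊗ τ) = I(σ)`. Hence each term of the infimum defining
`D_{A:B:C}` equals the corresponding term for `D_{A:B}`, whatever the measurement on `C`.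
-/

open Matrix Kronecker BigOperators
open scoped ComplexOrder

noncomputable section

variable {A B : Type*} [Fintype A] [DecidableEq A] [Fintype B] [DecidableEq B]

variable {C : Type*} [Fintype C] [DecidableEq C]

/-- the reduced state `ρ^B` of a tripartite state -/
noncomputable def margB3 (ρ : Matrix (A × B × C) (A × B × C) ℂ) : Matrix B B ℂ :=
  fun b b' => ∑ a, ∑ c, ρ (a, b, c) (a, b', c)

/-- the reduced state `ρ^C` of a tripartite state -/
noncomputable def margC3 (ρ : Matrix (A × B × C) (A × B × C) ℂ) : Matrix C C ℂ :=
  fun c c' => ∑ x : A × B, ρ (x.1, x.2, c) (x.1, x.2, c')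

/-- fully local von Neumann measurement on a bipartite state -/
noncomputable def measLoc2 (MA : VNMeas A) (MB : VNMeas B)
    (ρ : Matrix (A × B) (A × B) ℂ) : Matrix (A × B) (A × B) ℂ :=
  ∑ j, ∑ k, (MA.P j ⊗ₖ MB.P k) * ρ * (MA.P j ⊗ₖ MB.P k)

/-- bipartite global quantum discord -/
noncomputable def gqd2 (ρ : Matrix (A × B) (A × B) ℂ) : ℝ :=
  ⨅ m : VNMeas A × VNMeas B, (mutualInfo ρ - mutualInfo (measLoc2 m.1 m.2 ρ))

/-- generalized mutual information of a tripartite state -/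
noncomputable def I3 (ρ : Matrix (A × B × C) (A × B × C) ℂ) : ℝ :=
  vnEntropy (ptrBC3 ρ) + vnEntropy (margB3 ρ) + vnEntropy (margC3 ρ) - vnEntropy ρ

/-- fully local von Neumann measurement on a tripartite state -/
noncomputable def measLoc3 (MA : VNMeas A) (MB : VNMeas B) (MC : VNMeas C)
    (ρ : Matrix (A × B × C) (A × B × C) ℂ) : Matrix (A × B × C) (A × B × C) ℂ :=
  ∑ j, ∑ k, ∑ l, kron3 (MA.P j) (MB.P k) (MC.P l) * ρ * kron3 (MA.P j) (MB.P k) (MC.P l)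

/-- tripartite global quantum discord `D_{A:B:C}` -/
noncomputable def gqd3 (ρ : Matrix (A × B × C) (A × B × C) ℂ) : ℝ :=
  ⨅ m : VNMeas A × VNMeas B × VNMeas C,
    (I3 ρ - I3 (measLoc3 m.1 m.2.1 m.2.2 ρ))


/-- the product state `ρ^{AB} ⊗ ρ^C` as a matrix on `A × B × C` -/
noncomputable def prodState3 (ρAB : Matrix (A × B) (A × B) ℂ) (ρC : Matrix C C ℂ) :
    Matrix (A × B × C) (A × B × C) ℂ :=
  fun p q => ρAB (p.1, p.2.1) (q.1, q.2.1) * ρC p.2.2 q.2.2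


section Entropy

open Polynomial

theorem Matrix.IsHermitian.kronecker {R n m : Type*} [CommRing R] [StarRing R]
    {M : Matrix n n R} {N : Matrix m m R} (hM : M.IsHermitian) (hN : N.IsHermitian) :
    (M ⊗ₖ N).IsHermitian := by
  rw [IsHermitian, conjTranspose_kronecker, hM.eq, hN.eq]

variable {n m : Type*} [Fintype n] [DecidableEq n] [Fintype m] [DecidableEq m]

theorem vnEntropy_eq_sum_negMulLog_of_charpoly_eq {M : Matrix n n ℂ} (hM : M.IsHermitian)
    {ι : Type*} [Fintype ι] (d : ι → ℝ) (h : M.charpoly = ∏ i, (X - Polynomial.C (d i : ℂ))) :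
    vnEntropy M = ∑ i, Real.negMulLog (d i) := by
  have hroots : Finset.univ.val.map hM.eigenvalues = Finset.univ.val.map d := by
    apply Multiset.map_injective Complex.ofReal_injective
    have := congrArg Polynomial.roots h
    rw [hM.roots_charpoly_eq_eigenvalues, roots_prod _ _ (Finset.prod_ne_zero_iff.mpr
      fun i _ => X_sub_C_ne_zero _)] at this
    simpa [Multiset.map_map] using this
  calc vnEntropy M = ((Finset.univ.val.map hM.eigenvalues).map Real.negMulLog).sum := by
        rw [vnEntropy, dif_pos hM, Multiset.map_map]; rfl
    _ = ∑ i, Real.negMulLog (d i) := by rw [hroots, Multiset.map_map]; rfl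

theorem vnEntropy_reindex (e : n ≃ m) {M : Matrix n n ℂ} (hM : M.IsHermitian) :
    vnEntropy (reindex e e M) = vnEntropy M := by
  rw [vnEntropy_eq_sum_negMulLog_of_charpoly_eq (hM.reindex e) hM.eigenvalues
    (by rw [charpoly_reindex, hM.charpoly_eq]; rfl), vnEntropy, dif_pos hM]

theorem Matrix.IsHermitian.sum_eigenvalues_eq_one_s13 {M : Matrix n n ℂ} (hM : M.IsHermitian)
    (h1 : M.trace = 1) : ∑ i, hM.eigenvalues i = 1 := by
  have h : ∑ i, (hM.eigenvalues i : ℂ) = 1 := by simpa [h1] using hM.trace_eq_sum_eigenvalues.symm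
  exact_mod_cast h

theorem Matrix.IsHermitian.charpoly_kronecker {M : Matrix n n ℂ} {N : Matrix m m ℂ}
    (hM : M.IsHermitian) (hN : N.IsHermitian) :
    (M ⊗ₖ N).charpoly
      = ∏ p : n × m, (X - Polynomial.C ((hM.eigenvalues p.1 * hN.eigenvalues p.2 : ℝ) : ℂ)) := by
  have hU := Unitary.star_mul_self_of_mem hM.eigenvectorUnitary.2
  have hV := Unitary.star_mul_self_of_mem hN.eigenvectorUnitary.2
  conv_lhs => rw [hM.spectral_theorem, hN.spectral_theorem]
  simp only [Unitary.conjStarAlgAut_apply]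
  rw [mul_kronecker_mul, mul_kronecker_mul, charpoly_mul_comm, ← mul_assoc,
    ← mul_kronecker_mul, hU, hV, one_kronecker_one, one_mul, diagonal_kronecker_diagonal,
    charpoly_diagonal]
  simp

theorem vnEntropy_kronecker {M : Matrix n n ℂ} {N : Matrix m m ℂ}
    (hM : M.IsHermitian) (hN : N.IsHermitian) (hM1 : M.trace = 1) (hN1 : N.trace = 1) :
    vnEntropy (M ⊗ₖ N) = vnEntropy M + vnEntropy N := by
  rw [vnEntropy_eq_sum_negMulLog_of_charpoly_eq (hM.kronecker hN) _ (hM.charpoly_kronecker hN),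
    Fintype.sum_prod_type, vnEntropy, dif_pos hM, vnEntropy, dif_pos hN]
  simp only [Real.negMulLog_mul, Finset.sum_add_distrib, ← Finset.sum_mul, ← Finset.mul_sum,
    hM.sum_eigenvalues_eq_one_s13 hM1, hN.sum_eigenvalues_eq_one_s13 hN1, one_mul]

end Entropy


namespace VNMeas

variable {n : Type*} [Fintype n] [DecidableEq n]

def measure (M : VNMeas n) (ρ : Matrix n n ℂ) : Matrix n n ℂ :=
  ∑ j, M.P j * ρ * M.P j

theorem trace_measure (M : VNMeas n) (ρ : Matrix n n ℂ) : (M.measure ρ).trace = ρ.trace := by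
  simp_rw [measure, trace_sum, trace_mul_cycle _ ρ, M.idem, ← trace_sum, ← Finset.sum_mul,
    M.sum_eq, one_mul]

theorem isHermitian_measure (M : VNMeas n) {ρ : Matrix n n ℂ} (hρ : ρ.IsHermitian) :
    (M.measure ρ).IsHermitian :=
  have hterm : ∀ j, (M.P j * ρ * M.P j).IsHermitian := fun j => by
    simpa only [(M.herm j).eq] using isHermitian_mul_mul_conjTranspose (M.P j) hρ
  (conjTranspose_sum _ _).trans (Finset.sum_congr rfl fun j _ => (hterm j).eq)

def standard (n : Type*) [Fintype n] [DecidableEq n] : VNMeas n where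
  P j := single j j 1
  herm j := by simp [IsHermitian]
  idem j := by rw [single_mul_single_same, mul_one]
  rankOne j := by simp [trace]
  orth j k h := single_mul_single_of_ne (c := 1) j j k h 1
  sum_eq := sum_single_one

def prod (M : VNMeas A) (N : VNMeas B) : VNMeas (A × B) where
  P jk := M.P jk.1 ⊗ₖ N.P jk.2
  herm jk := (M.herm jk.1).kronecker (N.herm jk.2)
  idem jk := by rw [← mul_kronecker_mul, M.idem, N.idem]
  rankOne jk := by rw [trace_kronecker, M.rankOne, N.rankOne, mul_one]
  orth jk jk' h := by
    rw [← mul_kronecker_mul]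
    by_cases h1 : jk.1 = jk'.1
    · rw [N.orth _ _ fun h2 => h (Prod.ext h1 h2), kronecker_zero]
    · rw [M.orth _ _ h1, zero_kronecker]
  sum_eq := by
    rw [← one_kronecker_one, ← M.sum_eq, ← N.sum_eq]
    ext p q
    simp [Matrix.sum_apply, Fintype.sum_prod_type, Finset.sum_mul_sum]

end VNMeas

theorem measLoc2_eq_measure {α β : Type*} [Fintype α] [DecidableEq α] [Fintype β] [DecidableEq β]
    (Mα : VNMeas α) (Mβ : VNMeas β) (ρ : Matrix (α × β) (α × β) ℂ) :
    measLoc2 Mα Mβ ρ = (Mα.prod Mβ).measure ρ := by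
  rw [measLoc2, VNMeas.measure, Fintype.sum_prod_type]
  rfl

section ProductState

variable {α β γ : Type*}

theorem prodState3_eq_reindex (σ : Matrix (α × β) (α × β) ℂ) (τ : Matrix γ γ ℂ) :
    prodState3 σ τ = reindex (Equiv.prodAssoc α β γ) (Equiv.prodAssoc α β γ) (σ ⊗ₖ τ) := rfl

theorem kron3_eq_reindex (P : Matrix α α ℂ) (Q : Matrix β β ℂ) (R : Matrix γ γ ℂ) :
    kron3 P Q R = reindex (Equiv.prodAssoc α β γ) (Equiv.prodAssoc α β γ) ((P ⊗ₖ Q) ⊗ₖ R) := rfl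

theorem prodState3_sum_left {ι : Type*} (s : Finset ι) (σ : ι → Matrix (α × β) (α × β) ℂ)
    (τ : Matrix γ γ ℂ) : prodState3 (∑ i ∈ s, σ i) τ = ∑ i ∈ s, prodState3 (σ i) τ := by
  ext p q
  simp [prodState3, Matrix.sum_apply, Finset.sum_mul]

theorem prodState3_sum_right {ι : Type*} (s : Finset ι) (σ : Matrix (α × β) (α × β) ℂ)
    (τ : ι → Matrix γ γ ℂ) : prodState3 σ (∑ i ∈ s, τ i) = ∑ i ∈ s, prodState3 σ (τ i) := by
  ext p q
  simp [prodState3, Matrix.sum_apply, Finset.mul_sum]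

theorem ptrBC3_prodState3 [Fintype β] [Fintype γ] (σ : Matrix (α × β) (α × β) ℂ)
    {τ : Matrix γ γ ℂ} (hτ : τ.trace = 1) : ptrBC3 (prodState3 σ τ) = margFst σ := by
  ext a a'
  have hτ' : ∑ c, τ c c = 1 := hτ
  simp only [ptrBC3, prodState3, margFst, Fintype.sum_prod_type, ← Finset.mul_sum, hτ', mul_one]

theorem margB3_prodState3 [Fintype α] [Fintype γ] (σ : Matrix (α × β) (α × β) ℂ)
    {τ : Matrix γ γ ℂ} (hτ : τ.trace = 1) : margB3 (prodState3 σ τ) = margSnd σ := by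
  ext b b'
  have hτ' : ∑ c, τ c c = 1 := hτ
  simp only [margB3, prodState3, margSnd, ← Finset.mul_sum, hτ', mul_one]

theorem margC3_prodState3 [Fintype α] [Fintype β] {σ : Matrix (α × β) (α × β) ℂ}
    (hσ : σ.trace = 1) (τ : Matrix γ γ ℂ) : margC3 (prodState3 σ τ) = τ := by
  ext c c'
  have hσ' : ∑ x, σ x x = 1 := hσ
  simp only [margC3, prodState3, ← Finset.sum_mul, hσ', one_mul]

variable [Fintype α] [Fintype β] [Fintype γ]

theorem kron3_mul_prodState3_mul_kron3 (P : Matrix α α ℂ) (Q : Matrix β β ℂ) (R : Matrix γ γ ℂ)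
    (σ : Matrix (α × β) (α × β) ℂ) (τ : Matrix γ γ ℂ) :
    kron3 P Q R * prodState3 σ τ * kron3 P Q R
      = prodState3 ((P ⊗ₖ Q) * σ * (P ⊗ₖ Q)) (R * τ * R) := by
  simp only [kron3_eq_reindex, prodState3_eq_reindex, reindex_apply, submatrix_mul_equiv,
    mul_kronecker_mul]

variable [DecidableEq α] [DecidableEq β] [DecidableEq γ]

theorem measLoc3_prodState3 (Mα : VNMeas α) (Mβ : VNMeas β) (Mγ : VNMeas γ)
    (σ : Matrix (α × β) (α × β) ℂ) (τ : Matrix γ γ ℂ) :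
    measLoc3 Mα Mβ Mγ (prodState3 σ τ) = prodState3 (measLoc2 Mα Mβ σ) (Mγ.measure τ) := by
  simp only [measLoc3, kron3_mul_prodState3_mul_kron3, ← prodState3_sum_right,
    ← prodState3_sum_left]
  rfl

theorem vnEntropy_prodState3 {σ : Matrix (α × β) (α × β) ℂ} {τ : Matrix γ γ ℂ}
    (hσ : σ.IsHermitian) (hτ : τ.IsHermitian) (hσ1 : σ.trace = 1) (hτ1 : τ.trace = 1) :
    vnEntropy (prodState3 σ τ) = vnEntropy σ + vnEntropy τ := by
  rw [prodState3_eq_reindex, vnEntropy_reindex _ (hσ.kronecker hτ),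
    vnEntropy_kronecker hσ hτ hσ1 hτ1]

theorem I3_prodState3 {σ : Matrix (α × β) (α × β) ℂ} {τ : Matrix γ γ ℂ}
    (hσ : σ.IsHermitian) (hτ : τ.IsHermitian) (hσ1 : σ.trace = 1) (hτ1 : τ.trace = 1) :
    I3 (prodState3 σ τ) = mutualInfo σ := by
  rw [I3, mutualInfo, ptrBC3_prodState3 _ hτ1, margB3_prodState3 _ hτ1, margC3_prodState3 hσ1,
    vnEntropy_prodState3 hσ hτ hσ1 hτ1]
  ring

theorem I3_sub_I3_measLoc3_prodState3 {σ : Matrix (α × β) (α × β) ℂ} {τ : Matrix γ γ ℂ}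
    (hσ : IsState σ) (hτ : IsState τ) (Mα : VNMeas α) (Mβ : VNMeas β) (Mγ : VNMeas γ) :
    I3 (prodState3 σ τ) - I3 (measLoc3 Mα Mβ Mγ (prodState3 σ τ))
      = mutualInfo σ - mutualInfo (measLoc2 Mα Mβ σ) := by
  have hσ' : (measLoc2 Mα Mβ σ).IsHermitian := by
    rw [measLoc2_eq_measure]; exact VNMeas.isHermitian_measure _ hσ.1.isHermitian
  have hσ1' : (measLoc2 Mα Mβ σ).trace = 1 := by
    rw [measLoc2_eq_measure, VNMeas.trace_measure, hσ.2]
  rw [measLoc3_prodState3, I3_prodState3 hσ.1.isHermitian hτ.1.isHermitian hσ.2 hτ.2,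
    I3_prodState3 hσ' (Mγ.isHermitian_measure hτ.1.isHermitian) hσ1'
      (by rw [Mγ.trace_measure, hτ.2])]

end ProductState

/-- `D_{A:B:C}(ρ^{AB} ⊗ ρ^C) = D_{A:B}(ρ^{AB})`. -/
theorem gqd3_prod_eq_gqd2
    (ρAB : Matrix (A × B) (A × B) ℂ) (ρC : Matrix C C ℂ)
    (hAB : IsState ρAB) (hC : IsState ρC) :
    gqd3 (prodState3 ρAB ρC) = gqd2 ρAB := by
  have hsurj : Function.Surjective fun m : VNMeas A × VNMeas B × VNMeas C => (m.1, m.2.1) :=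
    fun m => ⟨(m.1, m.2, VNMeas.standard C), rfl⟩
  rw [gqd3, gqd2, ← hsurj.iInf_comp]
  exact iInf_congr fun m => I3_sub_I3_measLoc3_prodState3 hAB hC m.1 m.2.1 m.2.2

end
end
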